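/- arXiv:2104.13577 — 2 statements merged into one kernel-verified Lean document; each statement's English description precedes it below -/
import Mathlib

section
/- Let ω > 0, γ > 0, 0 < μ < 2, and let (α, β) satisfy α > 0, β ≥ 0, 2α − 3β ≥ 0 (with d = 3, p = 3). If f ∈ H¹(ℝ³) satisfies K^{α,β}_{ω,γ}(f) ≥ 0, then 2(α − β) S_{ω,γ}(f) ≤ (α − β) ‖f‖²_{H¹_{ω,γ}} ≤ (4α − 3β) S_{ω,γ}(f), where ‖f‖²_{H¹_{ω,γ}} := ω‖f‖²_{L²} + ‖∇f‖²_{L²} + ∫ γ|x|^{-μ}|f|² dx. -/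
open MeasureTheory

noncomputable section

abbrev E3 : Type := EuclideanSpace ℝ (Fin 3)

/-- `‖f‖_{L²}²` -/
def massI (f : E3 → ℂ) : ℝ := ∫ x : E3, ‖f x‖ ^ 2

/-- `‖∇f‖_{L²}²` -/
def gradI (f : E3 → ℂ) : ℝ := ∫ x : E3, ‖fderiv ℝ f x‖ ^ 2

/-- `∫ γ |x|^{-μ} |f|²` -/
def potI (γ μ : ℝ) (f : E3 → ℂ) : ℝ := ∫ x : E3, γ / ‖x‖ ^ μ * ‖f x‖ ^ 2

/-- `‖f‖_{L⁴}⁴` -/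
def l4I (f : E3 → ℂ) : ℝ := ∫ x : E3, ‖f x‖ ^ 4

/-- The action `S_{ω,γ}(f) = (ω/2)M + (1/2)‖∇f‖² + (1/2)∫γ|x|^{-μ}|f|² − (1/4)‖f‖⁴_{L⁴}`. -/
def actionS (ω γ μ : ℝ) (f : E3 → ℂ) : ℝ :=
  ω / 2 * massI f + 1 / 2 * gradI f + 1 / 2 * potI γ μ f - 1 / 4 * l4I f

/-- `K^{α,β}_{ω,γ}(f) = (d/dλ)|_{λ=0} S_{ω,γ}(e^{αλ} f(e^{βλ}·))`, computed explicitly from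
the scaling of each term of the action (`d = p = 3`). -/
def funcK (ω γ μ α β : ℝ) (f : E3 → ℂ) : ℝ :=
  ω * (2 * α - 3 * β) / 2 * massI f + (2 * α - β) / 2 * gradI f
    + (2 * α - (3 - μ) * β) / 2 * potI γ μ f - (4 * α - 3 * β) / 4 * l4I f

/-- membership in `H¹(ℝ³)` -/
def MemH1 (f : E3 → ℂ) : Prop :=
  MemLp f 2 volume ∧ MemLp (fun x => fderiv ℝ f x) 2 volume

/-- radial symmetry -/
def IsRadial (f : E3 → ℂ) : Prop := ∀ x y : E3, ‖x‖ = ‖y‖ → f x = f y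

/-- The `H¹_{ω,γ}` norm squared: `ω‖f‖²_{L²} + ‖∇f‖²_{L²} + ∫γ|x|^{-μ}|f|²`. -/
def h1NormSq (ω γ μ : ℝ) (f : E3 → ℂ) : ℝ := ω * massI f + gradI f + potI γ μ f

/-!
Write `N = ‖f‖²_{H¹_{ω,γ}}` and `L = ‖f‖⁴_{L⁴}`, so that `S = N/2 − L/4`. The lower bound is then
just `L ≥ 0` together with `α ≥ β`. For the upper bound, `K^{α,β}` differs from
`(2α − β)/2 · N − (4α − 3β)/4 · L` by the nonnegative terms `βω‖f‖²_{L²}` and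
`(2 − μ)β/2 · ∫γ|x|^{-μ}|f|²`, so `K ≥ 0` bounds `(4α − 3β)/4 · L` by `(2α − β)/2 · N`.
-/

theorem massI_nonneg (f : E3 → ℂ) : 0 ≤ massI f :=
  integral_nonneg fun _ => by positivity

theorem potI_nonneg {γ : ℝ} (hγ : 0 ≤ γ) (μ : ℝ) (f : E3 → ℂ) : 0 ≤ potI γ μ f :=
  integral_nonneg fun _ => by positivity

theorem l4I_nonneg (f : E3 → ℂ) : 0 ≤ l4I f :=
  integral_nonneg fun _ => by positivity

theorem actionS_eq_h1NormSq_sub_l4I (ω γ μ : ℝ) (f : E3 → ℂ) :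
    actionS ω γ μ f = h1NormSq ω γ μ f / 2 - l4I f / 4 := by
  unfold actionS h1NormSq
  ring

theorem two_mul_actionS_le_h1NormSq (ω : ℝ) {γ : ℝ} (μ : ℝ) (f : E3 → ℂ) :
    2 * actionS ω γ μ f ≤ h1NormSq ω γ μ f := by
  rw [actionS_eq_h1NormSq_sub_l4I]
  linarith [l4I_nonneg f]

theorem funcK_le {ω γ μ β : ℝ} (hω : 0 ≤ ω) (hγ : 0 ≤ γ) (hμ : μ ≤ 2) (hβ : 0 ≤ β)
    (α : ℝ) (f : E3 → ℂ) :
    funcK ω γ μ α β f ≤ (2 * α - β) / 2 * h1NormSq ω γ μ f - (4 * α - 3 * β) / 4 * l4I f := by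
  have hmass : 0 ≤ β * (ω * massI f) := by have := massI_nonneg f; positivity
  have hpot : 0 ≤ (2 - μ) * β * potI γ μ f := by
    have := potI_nonneg hγ μ f
    have : 0 ≤ 2 - μ := by linarith
    positivity
  unfold funcK h1NormSq
  linear_combination hmass + hpot / 2

theorem sub_mul_h1NormSq_le_of_funcK_nonneg {ω γ μ β : ℝ} (hω : 0 ≤ ω) (hγ : 0 ≤ γ)
    (hμ : μ ≤ 2) (hβ : 0 ≤ β) {α : ℝ} {f : E3 → ℂ} (hK : 0 ≤ funcK ω γ μ α β f) :
    (α - β) * h1NormSq ω γ μ f ≤ (4 * α - 3 * β) * actionS ω γ μ f := by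
  rw [actionS_eq_h1NormSq_sub_l4I]
  linear_combination hK + funcK_le hω hγ hμ hβ α f

theorem h1_action_equivalence_general (ω γ μ α β : ℝ)
    (hω : 0 < ω) (hγ : 0 < γ) (hμ2 : μ < 2)
    (hβ : 0 ≤ β) (hαβ : 0 ≤ 2 * α - 3 * β)
    (f : E3 → ℂ)
    (hK : 0 ≤ funcK ω γ μ α β f) :
    2 * (α - β) * actionS ω γ μ f ≤ (α - β) * h1NormSq ω γ μ f ∧
      (α - β) * h1NormSq ω γ μ f ≤ (4 * α - 3 * β) * actionS ω γ μ f := by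
  have hαβ' : 0 ≤ α - β := by linarith
  constructor
  · rw [mul_comm 2, mul_assoc]
    exact mul_le_mul_of_nonneg_left (two_mul_actionS_le_h1NormSq ω μ f) hαβ'
  · exact sub_mul_h1NormSq_le_of_funcK_nonneg hω.le hγ.le hμ2.le hβ hK

/-- equivalence of the `H¹_{ω,γ}`-norm and the action `S_{ω,γ}` under
`K^{α,β}_{ω,γ}(f) ≥ 0`. -/
theorem h1_action_equivalence (ω γ μ α β : ℝ)
    (hω : 0 < ω) (hγ : 0 < γ) (hμ : 0 < μ) (hμ2 : μ < 2)
    (hα : 0 < α) (hβ : 0 ≤ β) (hαβ : 0 ≤ 2 * α - 3 * β)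
    (f : E3 → ℂ) (hf : MemH1 f)
    (hK : 0 ≤ funcK ω γ μ α β f) :
    2 * (α - β) * actionS ω γ μ f ≤ (α - β) * h1NormSq ω γ μ f ∧
      (α - β) * h1NormSq ω γ μ f ≤ (4 * α - 3 * β) * actionS ω γ μ f :=
  h1_action_equivalence_general ω γ μ α β hω hγ hμ2 hβ hαβ f hK

end
end

section
/- Let H be a Hilbert space, {f_n} a bounded sequence in H, {t_n¹}, {t_n²} ⊂ ℝ, and let U(t) be a strongly continuous unitary group on H. Suppose U(t_n¹) f_n ⇀ f¹ weakly in H, and set R_n := f_n − U(−t_n¹) f¹. If t_n² − t_n¹ → τ ∈ ℝ and U(t_n²) R_n ⇀ f² weakly in H, then f² = 0. -/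
open scoped InnerProductSpace
open Filter Topology

/-!
Write `x_n := U(t_n¹) f_n − f¹ ⇀ 0`. The group law gives `U(t_n²) R_n = U(t_n² − t_n¹) x_n`,
so `⟪U(t_n²) R_n, g⟫ = ⟪x_n, U(t_n¹ − t_n²) g⟫`. Since `U(t_n¹ − t_n²) g → U(−τ) g` in norm and
`x_n` is bounded and weakly null, these inner products tend to `0`; hence `⟪f², f²⟫ = 0`.
-/

section WeakNull

variable {𝕜 E ι : Type*} [RCLike 𝕜] [NormedAddCommGroup E] [InnerProductSpace 𝕜 E]
  {l : Filter ι}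

theorem tendsto_inner_zero_of_weakly_null {x y : ι → E} {y₀ : E} {C : ℝ}
    (hx : ∀ g : E, Tendsto (fun i => ⟪x i, g⟫_𝕜) l (𝓝 0)) (hC : ∀ i, ‖x i‖ ≤ C)
    (hy : Tendsto y l (𝓝 y₀)) :
    Tendsto (fun i => ⟪x i, y i⟫_𝕜) l (𝓝 0) := by
  have hsplit : ∀ i, ⟪x i, y i⟫_𝕜 = ⟪x i, y₀⟫_𝕜 + ⟪x i, y i - y₀⟫_𝕜 := fun i => by
    rw [inner_sub_right, add_sub_cancel]
  have hbound : ∀ i, ‖⟪x i, y i - y₀⟫_𝕜‖ ≤ C * ‖y i - y₀‖ := fun i =>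
    (norm_inner_le_norm _ _).trans (mul_le_mul_of_nonneg_right (hC i) (norm_nonneg _))
  have hdist : Tendsto (fun i => C * ‖y i - y₀‖) l (𝓝 0) := by
    simpa using (tendsto_iff_norm_sub_tendsto_zero.mp hy).const_mul C
  simpa [hsplit] using (hx y₀).add (squeeze_zero_norm hbound hdist)

end WeakNull

section UnitaryGroup

variable {𝕜 E : Type*} [RCLike 𝕜] [NormedAddCommGroup E] [InnerProductSpace 𝕜 E]
  {U : ℝ → E ≃ₗᵢ[𝕜] E}

theorem unitaryGroup_apply_zero (hU : ∀ s t : ℝ, ∀ x : E, U (s + t) x = U s (U t x))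
    (x : E) : U 0 x = x :=
  (U 0).injective (by simpa using (hU 0 0 x).symm)

theorem unitaryGroup_apply_apply_neg (hU : ∀ s t : ℝ, ∀ x : E, U (s + t) x = U s (U t x))
    (s : ℝ) (x : E) : U s (U (-s) x) = x := by
  rw [← hU, add_neg_cancel, unitaryGroup_apply_zero hU]

theorem unitaryGroup_inner_apply_left (hU : ∀ s t : ℝ, ∀ x : E, U (s + t) x = U s (U t x))
    (s : ℝ) (x g : E) : ⟪U s x, g⟫_𝕜 = ⟪x, U (-s) g⟫_𝕜 := by
  conv_lhs => rw [← unitaryGroup_apply_apply_neg hU s g]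
  exact (U s).inner_map_map x (U (-s) g)

theorem unitaryGroup_tendsto_inner_apply_zero
    (hU : ∀ s t : ℝ, ∀ x : E, U (s + t) x = U s (U t x))
    (hcont : ∀ x : E, Continuous fun t => U t x) {ι : Type*} {l : Filter ι}
    {x : ι → E} {C : ℝ} (hx : ∀ g : E, Tendsto (fun i => ⟪x i, g⟫_𝕜) l (𝓝 0))
    (hC : ∀ i, ‖x i‖ ≤ C) {s : ι → ℝ} {τ : ℝ} (hs : Tendsto s l (𝓝 τ)) (g : E) :
    Tendsto (fun i => ⟪U (s i) (x i), g⟫_𝕜) l (𝓝 0) := by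
  simp only [unitaryGroup_inner_apply_left hU]
  exact tendsto_inner_zero_of_weakly_null hx hC (((hcont g).tendsto (-τ)).comp hs.neg)

end UnitaryGroup

theorem profile_time_orthogonality_general
    {H : Type*} [NormedAddCommGroup H] [InnerProductSpace ℂ H]
    (U : ℝ → H ≃ₗᵢ[ℂ] H)
    (hgroup : ∀ s t : ℝ, ∀ x : H, U (s + t) x = U s (U t x))
    (hcont : ∀ x : H, Continuous fun t => U t x)
    (f : ℕ → H) (C : ℝ) (hbdd : ∀ n, ‖f n‖ ≤ C)
    (t1 t2 : ℕ → ℝ) (f1 f2 : H) (τ : ℝ)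
    (hweak1 : ∀ g : H, Filter.Tendsto (fun n => ⟪U (t1 n) (f n), g⟫_ℂ)
      Filter.atTop (nhds ⟪f1, g⟫_ℂ))
    (R : ℕ → H) (hR : ∀ n, R n = f n - U (-(t1 n)) f1)
    (hτ : Filter.Tendsto (fun n => t2 n - t1 n) Filter.atTop (nhds τ))
    (hweak2 : ∀ g : H, Filter.Tendsto (fun n => ⟪U (t2 n) (R n), g⟫_ℂ)
      Filter.atTop (nhds ⟪f2, g⟫_ℂ)) :
    f2 = 0 := by
  set x : ℕ → H := fun n => U (t1 n) (f n) - f1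
  have hx_null : ∀ g : H, Tendsto (fun n => ⟪x n, g⟫_ℂ) atTop (𝓝 0) := fun g => by
    simpa [x, inner_sub_left] using (hweak1 g).sub_const ⟪f1, g⟫_ℂ
  have hx_bdd : ∀ n, ‖x n‖ ≤ C + ‖f1‖ := fun n =>
    (norm_sub_le _ _).trans (add_le_add_left (by simpa using hbdd n) _)
  have hshift : ∀ n, U (t2 n) (R n) = U (t2 n - t1 n) (x n) := fun n => by
    rw [← sub_add_cancel (t2 n) (t1 n), hgroup, add_sub_cancel_right, hR, map_sub,
      unitaryGroup_apply_apply_neg hgroup]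
  have hf2 : ⟪f2, f2⟫_ℂ = 0 := tendsto_nhds_unique (hweak2 f2) <| by
    simpa only [hshift] using
      unitaryGroup_tendsto_inner_apply_zero hgroup hcont hx_null hx_bdd hτ f2
  exact inner_self_eq_zero.mp hf2

/-- orthogonality of time parameters in the linear profile decomposition.
If `U` is a strongly continuous unitary group on a Hilbert space `H`,
`U(t_n¹) f_n ⇀ f¹`, `R_n = f_n − U(−t_n¹) f¹`, the relative time shifts converge
`t_n² − t_n¹ → τ`, and `U(t_n²) R_n ⇀ f²`, then `f² = 0`. -/
theorem profile_time_orthogonality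
    {H : Type*} [NormedAddCommGroup H] [InnerProductSpace ℂ H] [CompleteSpace H]
    (U : ℝ → H ≃ₗᵢ[ℂ] H)
    (hgroup : ∀ s t : ℝ, ∀ x : H, U (s + t) x = U s (U t x))
    (hcont : ∀ x : H, Continuous fun t => U t x)
    (f : ℕ → H) (C : ℝ) (hbdd : ∀ n, ‖f n‖ ≤ C)
    (t1 t2 : ℕ → ℝ) (f1 f2 : H) (τ : ℝ)
    (hweak1 : ∀ g : H, Filter.Tendsto (fun n => ⟪U (t1 n) (f n), g⟫_ℂ)
      Filter.atTop (nhds ⟪f1, g⟫_ℂ))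
    (R : ℕ → H) (hR : ∀ n, R n = f n - U (-(t1 n)) f1)
    (hτ : Filter.Tendsto (fun n => t2 n - t1 n) Filter.atTop (nhds τ))
    (hweak2 : ∀ g : H, Filter.Tendsto (fun n => ⟪U (t2 n) (R n), g⟫_ℂ)
      Filter.atTop (nhds ⟪f2, g⟫_ℂ)) :
    f2 = 0 :=
  profile_time_orthogonality_general U hgroup hcont f C hbdd t1 t2 f1 f2 τ hweak1 R hR hτ hweak2
end
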